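/- Let π be a policy on a finite-horizon MDP with transition model P̄, let f be the value function of π (so f_h(s) = sum_a π_h(a|s)(r_h(s,a) + P̄_{h,s,a}f_{h+1})), and let v be any function with v_{H+1} = f_{H+1} = 0 satisfying v_h(s) ≥ max_a (r_h(s,a) + P̄_{h,s,a}·v_{h+1}) pointwise and 0 ≤ v_h, f_h ≤ H. Then sum over (h,s,a) of d^π_h(s,a) * Var(P̄_{h,s,a}, f_{h+1} − v_{h+1}) ≤ 2H·(v_1(s_1) − f_1(s_1)), assuming v_1(s_1) − f_1(s_1) ≤ H. -/

import Mathlib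

open Finset

noncomputable def trajProb (H : ℕ) {S A : Type} [Fintype S] [Fintype A] [DecidableEq S]
    (π : ℕ → S → A → ℝ) (p : ℕ → S → A → S → ℝ) (s0 : S)
    (s : Fin (H + 1) → S) (a : Fin H → A) : ℝ :=
  (if s 0 = s0 then (1 : ℝ) else 0) *
    ∏ h : Fin H, (π h (s h.castSucc) (a h) * p h (s h.castSucc) (a h) (s h.succ))

noncomputable def W (H : ℕ) {S A : Type} [Fintype S] [Fintype A] [DecidableEq S]
    (π : ℕ → S → A → ℝ) (p : ℕ → S → A → S → ℝ) (s0 : S)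
    (u : ℕ → S → A → ℝ) : ℝ :=
  ∑ s : Fin (H + 1) → S, ∑ a : Fin H → A,
    trajProb H π p s0 s a * ∑ h : Fin H, u h (s h.castSucc) (a h)

/-- Occupancy measure `d^π_h(s,a)`. -/
noncomputable def occ (H : ℕ) {S A : Type} [Fintype S] [Fintype A] [DecidableEq S]
    [DecidableEq A] (π : ℕ → S → A → ℝ) (p : ℕ → S → A → S → ℝ) (s0 : S)
    (h0 : ℕ) (s1 : S) (a1 : A) : ℝ :=
  W H π p s0 (fun h s a => if h = h0 ∧ s = s1 ∧ a = a1 then 1 else 0)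

/-!
Write `g_h = f_h - v_h` and let `m_h` be the law of the state at step `h`, so that
`d^π_h(s, a) = m_h(s) π_h(a | s)`. Put `y_h(s) = ∑_a π_h(a | s) P̄_{h,s,a} g_{h+1}`; optimism of `v`
gives `g_h ≤ y_h`. By Jensen over actions, the `d^π`-weighted variance at step `h` is at most
`E_{m_{h+1}}[g_{h+1}²] - E_{m_h}[y_h²]`, and since `-H ≤ g_h ≤ y_h` we have
`g_h² - y_h² ≤ 2H (y_h - g_h)`. Both `E_{m_h}[g_h²]` and `E_{m_h}[g_h]` then telescope in `h`,
leaving `-g_0(s_0)² - 2H g_0(s_0) ≤ 2H (v_0 - f_0)(s_0)`.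
-/

theorem Fin.sum_univ_fun_snoc {α M : Type*} [Fintype α] [AddCommMonoid M] (n : ℕ)
    (F : (Fin (n + 1) → α) → M) :
    ∑ s, F s = ∑ s : Fin n → α, ∑ x, F (Fin.snoc s x) := by
  rw [← (Fin.snocEquiv fun _ => α).sum_comp, Fintype.sum_prod_type_right]
  rfl

section Occupancy

variable {S A : Type} [Fintype S] [Fintype A] [DecidableEq S]
  (π : ℕ → S → A → ℝ) (P : ℕ → S → A → S → ℝ) (s0 : S)

noncomputable def stateDist : ℕ → S → ℝ
  | 0 => fun s => if s = s0 then 1 else 0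
  | h + 1 => fun s' => ∑ s, ∑ a, stateDist h s * π h s a * P h s a s'

theorem sum_stateDist_succ_mul (h : ℕ) (F : S → ℝ) :
    ∑ s', stateDist π P s0 (h + 1) s' * F s' =
      ∑ s, stateDist π P s0 h s * ∑ a, π h s a * ∑ s', P h s a s' * F s' := by
  simp only [stateDist, Finset.sum_mul, Finset.mul_sum, mul_assoc]
  rw [Finset.sum_comm]
  refine Finset.sum_congr rfl fun s _ => Finset.sum_comm

theorem stateDist_nonneg (hπ : ∀ h s a, 0 ≤ π h s a) (hP : ∀ h s a s', 0 ≤ P h s a s') :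
    ∀ h s, 0 ≤ stateDist π P s0 h s
  | 0, s => by simp only [stateDist]; split_ifs <;> norm_num
  | h + 1, s' => Finset.sum_nonneg fun s _ => Finset.sum_nonneg fun a _ =>
      mul_nonneg (mul_nonneg (stateDist_nonneg hπ hP h s) (hπ h s a)) (hP h s a s')

theorem trajProb_snoc (n : ℕ) (s : Fin (n + 1) → S) (x : S) (a : Fin n → A) (b : A) :
    trajProb (n + 1) π P s0 (Fin.snoc s x) (Fin.snoc a b) =
      trajProb n π P s0 s a * (π n (s (Fin.last n)) b * P n (s (Fin.last n)) b x) := by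
  simp [trajProb, Fin.prod_univ_castSucc, Fin.succ_castSucc, -Fin.castSucc_succ]

theorem sum_trajProb_mul_last (n : ℕ) (F : S → ℝ) :
    ∑ s : Fin (n + 1) → S, ∑ a : Fin n → A, trajProb n π P s0 s a * F (s (Fin.last n)) =
      ∑ x, stateDist π P s0 n x * F x := by
  induction n generalizing F with
  | zero =>
    simp [Fin.sum_univ_fun_snoc (n := 0), trajProb, stateDist, Fin.snoc_zero]
    exact Fintype.sum_ite_eq' s0 F
  | succ n ih =>
    have last_step : ∀ (s : Fin (n + 1) → S) (a : Fin n → A),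
        ∑ x, ∑ b, trajProb (n + 1) π P s0 (Fin.snoc s x) (Fin.snoc a b) * F x =
          trajProb n π P s0 s a *
            ∑ b, π n (s (Fin.last n)) b * ∑ x, P n (s (Fin.last n)) b x * F x := by
      intro s a
      simp only [trajProb_snoc, Finset.mul_sum, mul_assoc]
      exact Finset.sum_comm
    calc _ = ∑ s : Fin (n + 1) → S, ∑ a : Fin n → A, trajProb n π P s0 s a *
            ∑ b, π n (s (Fin.last n)) b * ∑ x, P n (s (Fin.last n)) b x * F x := by
          rw [Fin.sum_univ_fun_snoc]
          refine Finset.sum_congr rfl fun s _ => ?_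
          simp only [Fin.snoc_last, Fin.sum_univ_fun_snoc (α := A)]
          rw [Finset.sum_comm]
          exact Finset.sum_congr rfl fun a _ => last_step s a
      _ = _ := ih fun y => ∑ b, π n y b * ∑ x, P n y b x * F x
      _ = _ := (sum_stateDist_succ_mul π P s0 n F).symm

theorem W_eq_sum_stateDist (hπ : ∀ h s, ∑ a, π h s a = 1) (hP : ∀ h s a, ∑ s', P h s a s' = 1)
    (n : ℕ) (u : ℕ → S → A → ℝ) :
    W n π P s0 u = ∑ h ∈ Finset.range n, ∑ s, stateDist π P s0 h s * ∑ a, π h s a * u h s a := by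
  induction n with
  | zero => simp [W]
  | succ n ih =>
    have last_step : ∀ (s : Fin (n + 1) → S) (a : Fin n → A),
        ∑ x, ∑ b, trajProb (n + 1) π P s0 (Fin.snoc s x) (Fin.snoc a b) *
            ∑ h : Fin (n + 1), u h ((Fin.snoc s x : Fin (n + 2) → S) h.castSucc)
              ((Fin.snoc a b : Fin (n + 1) → A) h) =
          trajProb n π P s0 s a * ∑ h : Fin n, u h (s h.castSucc) (a h) +
            trajProb n π P s0 s a * ∑ b, π n (s (Fin.last n)) b * u n (s (Fin.last n)) b := by
      intro s a
      simp only [trajProb_snoc, Fin.sum_univ_castSucc, Fin.snoc_castSucc, Fin.snoc_last,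
        Fin.val_castSucc, Fin.val_last]
      rw [Finset.sum_comm]
      simp only [mul_add, Finset.sum_add_distrib, ← Finset.sum_mul, ← Finset.mul_sum, hP, hπ,
        one_mul, mul_assoc]
    calc W (n + 1) π P s0 u
        = ∑ s : Fin (n + 1) → S, ∑ a : Fin n → A,
            (trajProb n π P s0 s a * ∑ h : Fin n, u h (s h.castSucc) (a h) +
              trajProb n π P s0 s a * ∑ b, π n (s (Fin.last n)) b * u n (s (Fin.last n)) b) := by
          rw [W, Fin.sum_univ_fun_snoc]
          refine Finset.sum_congr rfl fun s _ => ?_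
          simp only [Fin.sum_univ_fun_snoc (α := A)]
          rw [Finset.sum_comm]
          exact Finset.sum_congr rfl fun a _ => last_step s a
      _ = W n π P s0 u + ∑ s, stateDist π P s0 n s * ∑ a, π n s a * u n s a := by
          simp only [Finset.sum_add_distrib]
          rw [sum_trajProb_mul_last π P s0 n fun y => ∑ b, π n y b * u n y b]
          rfl
      _ = _ := by rw [ih, Finset.sum_range_succ]

theorem occ_eq_stateDist_mul [DecidableEq A] (hπ : ∀ h s, ∑ a, π h s a = 1)
    (hP : ∀ h s a, ∑ s', P h s a s' = 1) {H h : ℕ} (hh : h < H) (s : S) (a : A) :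
    occ H π P s0 h s a = stateDist π P s0 h s * π h s a := by
  simp [occ, W_eq_sum_stateDist π P s0 hπ hP, hh, ite_and, mul_ite]

end Occupancy

theorem sq_sum_mul_le_sum_mul_sq {ι : Type*} (t : Finset ι) {w : ι → ℝ}
    (hw0 : ∀ i ∈ t, 0 ≤ w i) (hw1 : ∑ i ∈ t, w i = 1) (x : ι → ℝ) :
    (∑ i ∈ t, w i * x i) ^ 2 ≤ ∑ i ∈ t, w i * x i ^ 2 := by
  simpa using (even_two.convexOn_pow (𝕜 := ℝ)).map_sum_le hw0 hw1 fun _ _ => Set.mem_univ _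

theorem sum_mul_sub_sq_le_of_le_sum {ι : Type*} (t : Finset ι) {w : ι → ℝ}
    (hw0 : ∀ i ∈ t, 0 ≤ w i) (hw1 : ∑ i ∈ t, w i = 1) (q x : ι → ℝ) {c d : ℝ}
    (hd : d ≤ ∑ i ∈ t, w i * x i) (hc : -c ≤ d) :
    ∑ i ∈ t, w i * (q i - x i ^ 2) ≤
      ∑ i ∈ t, w i * q i - d ^ 2 + 2 * c * (∑ i ∈ t, w i * x i - d) := by
  have jensen := sq_sum_mul_le_sum_mul_sq t hw0 hw1 x
  simp only [mul_sub, Finset.sum_sub_distrib]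
  nlinarith

section ValueGap

variable {S A : Type} [Fintype S] [Fintype A]
  (π : ℕ → S → A → ℝ) (P : ℕ → S → A → S → ℝ) (r : ℕ → S → A → ℝ) (f v : ℕ → S → ℝ)

theorem value_gap_le_expected_next_gap {h : ℕ} {s : S} (hπ0 : ∀ a, 0 ≤ π h s a)
    (hπ1 : ∑ a, π h s a = 1)
    (hf : f h s = ∑ a, π h s a * (r h s a + ∑ s', P h s a s' * f (h + 1) s'))
    (hbell : ∀ a, r h s a + ∑ s', P h s a s' * v (h + 1) s' ≤ v h s) :
    f h s - v h s ≤ ∑ a, π h s a * ∑ s', P h s a s' * (f (h + 1) s' - v (h + 1) s') := by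
  have backup_le : ∑ a, π h s a * (r h s a + ∑ s', P h s a s' * v (h + 1) s') ≤ v h s :=
    calc _ ≤ ∑ a, π h s a * v h s :=
          Finset.sum_le_sum fun a _ => mul_le_mul_of_nonneg_left (hbell a) (hπ0 a)
      _ = v h s := by rw [← Finset.sum_mul, hπ1, one_mul]
  have expand : ∑ a, π h s a * ∑ s', P h s a s' * (f (h + 1) s' - v (h + 1) s') =
      ∑ a, π h s a * (r h s a + ∑ s', P h s a s' * f (h + 1) s') -
        ∑ a, π h s a * (r h s a + ∑ s', P h s a s' * v (h + 1) s') := by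
    simp only [mul_sub, Finset.sum_sub_distrib, mul_add, Finset.sum_add_distrib]
    ring
  linarith

variable [DecidableEq S] (s0 : S)

theorem sum_stateDist_mul_variance_le (hπ : ∀ h s, (∀ a, 0 ≤ π h s a) ∧ ∑ a, π h s a = 1)
    (hP : ∀ h s a s', 0 ≤ P h s a s') {c : ℝ} {h : ℕ}
    (hf : ∀ s, f h s = ∑ a, π h s a * (r h s a + ∑ s', P h s a s' * f (h + 1) s'))
    (hbell : ∀ s a, r h s a + ∑ s', P h s a s' * v (h + 1) s' ≤ v h s)
    (hgap : ∀ s, v h s - f h s ≤ c) :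
    ∑ s, ∑ a, stateDist π P s0 h s * π h s a *
        ((∑ s', P h s a s' * (f (h + 1) s' - v (h + 1) s') ^ 2)
          - (∑ s', P h s a s' * (f (h + 1) s' - v (h + 1) s')) ^ 2)
      ≤ (∑ s, stateDist π P s0 (h + 1) s * (f (h + 1) s - v (h + 1) s) ^ 2
          - ∑ s, stateDist π P s0 h s * (f h s - v h s) ^ 2)
        + 2 * c * (∑ s, stateDist π P s0 (h + 1) s * (f (h + 1) s - v (h + 1) s)
          - ∑ s, stateDist π P s0 h s * (f h s - v h s)) := by
  have pointwise : ∀ s, ∑ a, π h s a *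
        ((∑ s', P h s a s' * (f (h + 1) s' - v (h + 1) s') ^ 2)
          - (∑ s', P h s a s' * (f (h + 1) s' - v (h + 1) s')) ^ 2)
      ≤ ∑ a, π h s a * ∑ s', P h s a s' * (f (h + 1) s' - v (h + 1) s') ^ 2
          - (f h s - v h s) ^ 2
        + 2 * c * (∑ a, π h s a * ∑ s', P h s a s' * (f (h + 1) s' - v (h + 1) s')
          - (f h s - v h s)) := fun s =>
    sum_mul_sub_sq_le_of_le_sum _ (fun a _ => (hπ h s).1 a) (hπ h s).2 _ _
      (value_gap_le_expected_next_gap π P r f v (hπ h s).1 (hπ h s).2 (hf s) (hbell s))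
      (by linarith [hgap s])
  have hm : ∀ s, 0 ≤ stateDist π P s0 h s :=
    stateDist_nonneg π P s0 (fun h s => (hπ h s).1) hP h
  rw [sum_stateDist_succ_mul, sum_stateDist_succ_mul]
  calc _ = ∑ s, stateDist π P s0 h s * ∑ a, π h s a *
        ((∑ s', P h s a s' * (f (h + 1) s' - v (h + 1) s') ^ 2)
          - (∑ s', P h s a s' * (f (h + 1) s' - v (h + 1) s')) ^ 2) := by
        simp only [Finset.mul_sum, mul_assoc]
    _ ≤ _ := Finset.sum_le_sum fun s _ => mul_le_mul_of_nonneg_left (pointwise s) (hm s)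
    _ = _ := by
        rw [← Finset.sum_sub_distrib, ← Finset.sum_sub_distrib, Finset.mul_sum,
          ← Finset.sum_add_distrib]
        exact Finset.sum_congr rfl fun s _ => by ring

end ValueGap

theorem stmt15_general {S A : Type} [Fintype S] [Fintype A] [DecidableEq S] [DecidableEq A]
    (H : ℕ) (π : ℕ → S → A → ℝ)
    (hπ : ∀ h s, (∀ a, 0 ≤ π h s a) ∧ ∑ a, π h s a = 1)
    (P : ℕ → S → A → S → ℝ)
    (hP : ∀ h s a, (∀ s', 0 ≤ P h s a s') ∧ ∑ s', P h s a s' = 1)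
    (r : ℕ → S → A → ℝ)
    (s0 : S) (f v : ℕ → S → ℝ)
    (hfH : ∀ s, f H s = 0) (hvH : ∀ s, v H s = 0)
    (hf : ∀ h, h < H → ∀ s,
      f h s = ∑ a, π h s a * (r h s a + ∑ s', P h s a s' * f (h + 1) s'))
    (hbell : ∀ h, h < H → ∀ s a, r h s a + ∑ s', P h s a s' * v (h + 1) s' ≤ v h s)
    (hfb : ∀ h s, h < H → 0 ≤ f h s ∧ f h s ≤ (H : ℝ))
    (hvb : ∀ h s, h < H → 0 ≤ v h s ∧ v h s ≤ (H : ℝ)) :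
    ∑ h ∈ Finset.range H, ∑ s : S, ∑ a : A,
        occ H π P s0 h s a *
          ((∑ s', P h s a s' * (f (h + 1) s' - v (h + 1) s') ^ 2)
            - (∑ s', P h s a s' * (f (h + 1) s' - v (h + 1) s')) ^ 2)
      ≤ 2 * (H : ℝ) * (v 0 s0 - f 0 s0) := by
  set φ : ℕ → ℝ := fun j => ∑ s, stateDist π P s0 j s * (f j s - v j s) ^ 2
  set ψ : ℕ → ℝ := fun j => ∑ s, stateDist π P s0 j s * (f j s - v j s)
  have hocc : ∀ h ∈ Finset.range H, ∀ s a, occ H π P s0 h s a = stateDist π P s0 h s * π h s a :=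
    fun h hh => occ_eq_stateDist_mul π P s0 (fun h s => (hπ h s).2) (fun h s a => (hP h s a).2)
      (Finset.mem_range.mp hh)
  have hφ0 : φ 0 = (f 0 s0 - v 0 s0) ^ 2 := by simp [φ, stateDist]
  have hψ0 : ψ 0 = f 0 s0 - v 0 s0 := by simp [ψ, stateDist]
  have hφH : φ H = 0 := by simp [φ, hfH, hvH]
  have hψH : ψ H = 0 := by simp [ψ, hfH, hvH]
  calc _ ≤ ∑ h ∈ Finset.range H, ((φ (h + 1) - φ h) + 2 * H * (ψ (h + 1) - ψ h)) := by
        refine Finset.sum_le_sum fun h hh => ?_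
        have hhH := Finset.mem_range.mp hh
        simp only [hocc h hh]
        exact sum_stateDist_mul_variance_le π P r f v s0 hπ (fun h s a => (hP h s a).1)
          (hf h hhH) (hbell h hhH) fun s => by linarith [(hvb h s hhH).2, (hfb h s hhH).1]
    _ = (φ H - φ 0) + 2 * H * (ψ H - ψ 0) := by
        rw [Finset.sum_add_distrib, ← Finset.mul_sum, Finset.sum_range_sub, Finset.sum_range_sub]
    _ ≤ 2 * H * (v 0 s0 - f 0 s0) := by
        rw [hφ0, hψ0, hφH, hψH]
        nlinarith [sq_nonneg (f 0 s0 - v 0 s0)]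

/-- **Variance of the correction term.** If `f` is the value function of `π` under `P̄`,
and `v` is an optimistic value function (dominating its Bellman backup) with
`0 ≤ v, f ≤ H`, `v_H = f_H = 0` (0-indexed) and `v₁(s₁) − f₁(s₁) ≤ H`, then the
occupancy-weighted cumulative variance of `f − v` is at most `2H·(v₁(s₁) − f₁(s₁))`. -/
theorem stmt15 {S A : Type} [Fintype S] [Fintype A] [DecidableEq S] [DecidableEq A]
    (H : ℕ) (π : ℕ → S → A → ℝ)
    (hπ : ∀ h s, (∀ a, 0 ≤ π h s a) ∧ ∑ a, π h s a = 1)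
    (P : ℕ → S → A → S → ℝ)
    (hP : ∀ h s a, (∀ s', 0 ≤ P h s a s') ∧ ∑ s', P h s a s' = 1)
    (r : ℕ → S → A → ℝ) (hr : ∀ h s a, r h s a ∈ Set.Icc (0 : ℝ) 1)
    (s0 : S) (f v : ℕ → S → ℝ)
    (hfH : ∀ s, f H s = 0) (hvH : ∀ s, v H s = 0)
    (hf : ∀ h, h < H → ∀ s,
      f h s = ∑ a, π h s a * (r h s a + ∑ s', P h s a s' * f (h + 1) s'))
    (hbell : ∀ h, h < H → ∀ s a, r h s a + ∑ s', P h s a s' * v (h + 1) s' ≤ v h s)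
    (hfb : ∀ h s, h < H → 0 ≤ f h s ∧ f h s ≤ (H : ℝ))
    (hvb : ∀ h s, h < H → 0 ≤ v h s ∧ v h s ≤ (H : ℝ))
    (hgap : v 0 s0 - f 0 s0 ≤ (H : ℝ)) :
    ∑ h ∈ Finset.range H, ∑ s : S, ∑ a : A,
        occ H π P s0 h s a *
          ((∑ s', P h s a s' * (f (h + 1) s' - v (h + 1) s') ^ 2)
            - (∑ s', P h s a s' * (f (h + 1) s' - v (h + 1) s')) ^ 2)
      ≤ 2 * (H : ℝ) * (v 0 s0 - f 0 s0) :=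
  stmt15_general H π hπ P hP r s0 f v hfH hvH hf hbell hfb hvb
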